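/- Let P be the algebra above with symmetrizing form φ, ν = Σ e_i f_i, and c = ∏_{i∈S} e_i f_i for a k-element subset S ⊆ {1,…,d}. Then c ν^{d−k} = (d−k)! ∏_{i=1}^d e_i f_i, and consequently φ(c ν^{d−k} T±) = ±(d−k)!/2, where T± = (1±K)/2. -/

import Mathlib

/-- Generators of the algebra `P`: `e i`, `f i` (`1 ≤ i ≤ d`) and `K`. -/
inductive SFGen (d : ℕ) : Type
  | e : Fin d → SFGen d
  | f : Fin d → SFGen d
  | K : SFGen d

/-- The defining relations of `P`: `K² = 1`, the `e i`, `f j` pairwise anticommute,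
and `K` anticommutes with every `e i` and `f i`. -/
inductive SFRel (d : ℕ) : FreeAlgebra ℂ (SFGen d) → FreeAlgebra ℂ (SFGen d) → Prop
  | Ksq : SFRel d (FreeAlgebra.ι ℂ (SFGen.K (d := d)) * FreeAlgebra.ι ℂ SFGen.K) 1
  | ee (i j : Fin d) : SFRel d (FreeAlgebra.ι ℂ (SFGen.e i) * FreeAlgebra.ι ℂ (SFGen.e j))
      (-(FreeAlgebra.ι ℂ (SFGen.e j) * FreeAlgebra.ι ℂ (SFGen.e i)))
  | ff (i j : Fin d) : SFRel d (FreeAlgebra.ι ℂ (SFGen.f i) * FreeAlgebra.ι ℂ (SFGen.f j))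
      (-(FreeAlgebra.ι ℂ (SFGen.f j) * FreeAlgebra.ι ℂ (SFGen.f i)))
  | ef (i j : Fin d) : SFRel d (FreeAlgebra.ι ℂ (SFGen.e i) * FreeAlgebra.ι ℂ (SFGen.f j))
      (-(FreeAlgebra.ι ℂ (SFGen.f j) * FreeAlgebra.ι ℂ (SFGen.e i)))
  | Ke (i : Fin d) : SFRel d (FreeAlgebra.ι ℂ (SFGen.K (d := d)) * FreeAlgebra.ι ℂ (SFGen.e i))
      (-(FreeAlgebra.ι ℂ (SFGen.e i) * FreeAlgebra.ι ℂ SFGen.K))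
  | Kf (i : Fin d) : SFRel d (FreeAlgebra.ι ℂ (SFGen.K (d := d)) * FreeAlgebra.ι ℂ (SFGen.f i))
      (-(FreeAlgebra.ι ℂ (SFGen.f i) * FreeAlgebra.ι ℂ SFGen.K))

/-- The algebra `P` generated by `e i`, `f i` (`1 ≤ i ≤ d`) and `K` with the above
relations. -/
def SF (d : ℕ) : Type := RingQuot (SFRel d)

noncomputable instance (d : ℕ) : Ring (SF d) := inferInstanceAs (Ring (RingQuot (SFRel d)))
noncomputable instance (d : ℕ) : Algebra ℂ (SF d) :=
  inferInstanceAs (Algebra ℂ (RingQuot (SFRel d)))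

/-- The generator `e i` of `P`. -/
noncomputable def eg (d : ℕ) (i : Fin d) : SF d :=
  RingQuot.mkAlgHom ℂ (SFRel d) (FreeAlgebra.ι ℂ (SFGen.e i))

/-- The generator `f i` of `P`. -/
noncomputable def fg (d : ℕ) (i : Fin d) : SF d :=
  RingQuot.mkAlgHom ℂ (SFRel d) (FreeAlgebra.ι ℂ (SFGen.f i))

/-- The generator `K` of `P`. -/
noncomputable def Kg (d : ℕ) : SF d :=
  RingQuot.mkAlgHom ℂ (SFRel d) (FreeAlgebra.ι ℂ SFGen.K)

/-- The monomial `(∏ᵢ e iᵐⁱ f iⁿⁱ) Kˡ` of `P`, in the order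
`e 1^{m₁} f 1^{n₁} ⋯ e d^{m_d} f d^{n_d} K^ℓ`. -/
noncomputable def SFmono (d : ℕ) (m n : Fin d → Bool) (ℓ : Bool) : SF d :=
  (List.ofFn (fun i : Fin d =>
      (if m i then eg d i else 1) * (if n i then fg d i else 1))).prod *
    (if ℓ then Kg d else 1)

/-- `ν = Σᵢ eᵢ fᵢ`. -/
noncomputable def nuSF (d : ℕ) : SF d := ∑ i : Fin d, eg d i * fg d i

/-- The monomial `∏_{i ∈ S} eᵢ fᵢ` (factors in increasing order of `i`). -/
noncomputable def prodEF (d : ℕ) (S : Finset (Fin d)) : SF d :=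
  (List.ofFn (fun i : Fin d => if i ∈ S then eg d i * fg d i else 1)).prod

/-- `T⁺ = (1 + K)/2`. -/
noncomputable def Tp (d : ℕ) : SF d := (2 : ℂ)⁻¹ • (1 + Kg d)

/-- `T⁻ = (1 − K)/2`. -/
noncomputable def Tm (d : ℕ) : SF d := (2 : ℂ)⁻¹ • (1 - Kg d)


section SFauxSec
variable {d : ℕ}

lemma SF.rel {d : ℕ} {x y : FreeAlgebra ℂ (SFGen d)} (h : SFRel d x y) :
    RingQuot.mkAlgHom ℂ (SFRel d) x = RingQuot.mkAlgHom ℂ (SFRel d) y :=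
  RingQuot.mkAlgHom_rel ℂ h

lemma hee (i j : Fin d) : eg d i * eg d j = -(eg d j * eg d i) := by
  have h := SF.rel (SFRel.ee i j)
  simp only [map_neg, map_mul] at h
  exact h

lemma hff (i j : Fin d) : fg d i * fg d j = -(fg d j * fg d i) := by
  have h := SF.rel (SFRel.ff i j)
  simp only [map_neg, map_mul] at h
  exact h

lemma hef (i j : Fin d) : eg d i * fg d j = -(fg d j * eg d i) := by
  have h := SF.rel (SFRel.ef i j)
  simp only [map_neg, map_mul] at h
  exact h

lemma hfe (i j : Fin d) : fg d i * eg d j = -(eg d j * fg d i) := by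
  rw [hef j i, neg_neg]

lemma e_sq (i : Fin d) : eg d i * eg d i = 0 := by
  have h := hee i i
  have h2 : (2:ℂ) • (eg d i * eg d i) = 0 := by
    rw [two_smul]; nth_rewrite 1 [h]; exact neg_add_cancel _
  have := congrArg (fun y => (2:ℂ)⁻¹ • y) h2
  simpa [smul_smul] using this

noncomputable def wEF (d : ℕ) (i : Fin d) : SF d := eg d i * fg d i

lemma w_sq (i : Fin d) : wEF d i * wEF d i = 0 := by
  have h1 : eg d i * fg d i * (eg d i * fg d i)
      = -(eg d i * (eg d i * (fg d i * fg d i))) := by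
    rw [mul_assoc, ← mul_assoc (fg d i), hfe]
    noncomm_ring
  rw [wEF, h1, ← mul_assoc, ← mul_assoc, e_sq, zero_mul, zero_mul, neg_zero]

lemma swap4 {R : Type*} [Ring R] {a b c e : R} (h1 : a*c = -(c*a)) (h2 : a*e = -(e*a))
    (h3 : b*c = -(c*b)) (h4 : b*e = -(e*b)) : (a*b)*(c*e) = (c*e)*(a*b) := by
  have s1 : a*b*(c*e) = a*(b*c)*e := by noncomm_ring
  rw [s1, h3]
  have s2 : a * -(c*b) * e = -((a*c)*(b*e)) := by noncomm_ring
  rw [s2, h1, h4]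
  have s3 : -(-(c*a) * -(e*b)) = -(c*((a*e)*b)) := by noncomm_ring
  rw [s3, h2]
  noncomm_ring

lemma w_comm (i j : Fin d) : Commute (wEF d i) (wEF d j) :=
  swap4 (hee i j) (hef i j) (hfe i j) (hff i j)

noncomputable def cS (d : ℕ) (S : Finset (Fin d)) : SF d :=
  S.noncommProd (wEF d) (fun i _ j _ _ => w_comm i j)

lemma ofFn_prod_eq {M : Type*} [Monoid M] {n : ℕ} (g : Fin n → M) (comm) :
    Finset.univ.noncommProd g comm = (List.ofFn g).prod := by
  rw [Finset.noncommProd_congr (List.toFinset_finRange n).symm (fun x _ => rfl) comm]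
  erw [Finset.noncommProd_toFinset _ _ _ (List.nodup_finRange n)]
  rw [← List.ofFn_eq_map]

lemma prodEF_eq_cS (S : Finset (Fin d)) : prodEF d S = cS d S := by
  have comm : ((Finset.univ : Finset (Fin d)) : Set (Fin d)).Pairwise
      (Function.onFun Commute (fun i => if i ∈ S then wEF d i else 1)) := by
    intro i _ j _ _
    unfold Function.onFun
    dsimp only
    split <;> split <;>
      first
      | exact w_comm i j
      | exact Commute.one_right _
      | exact Commute.one_left _
  have hw : ∀ i : Fin d, eg d i * fg d i = wEF d i := fun _ => rfl
  rw [prodEF]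
  simp only [hw]
  rw [← ofFn_prod_eq (fun i : Fin d => if i ∈ S then wEF d i else 1) comm]
  rw [Finset.noncommProd_congr (Finset.union_sdiff_of_subset (Finset.subset_univ S)).symm
    (fun x _ => rfl) comm]
  erw [Finset.noncommProd_union_of_disjoint Finset.disjoint_sdiff]
  rw [Finset.noncommProd_eq_pow_card (Finset.univ \ S) _ _ 1
    (fun x hx => by simp [Finset.mem_sdiff.mp hx]), one_pow, mul_one]
  rw [cS]
  exact Finset.noncommProd_congr rfl (fun x hx => by simp [hx]) _

lemma cS_insert {S : Finset (Fin d)} {i : Fin d} (hi : i ∉ S) :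
    cS d S * wEF d i = cS d (insert i S) := by
  rw [cS, cS]
  erw [Finset.noncommProd_insert_of_notMem' _ _ _ _ hi]

lemma cS_mul_mem {S : Finset (Fin d)} {i : Fin d} (hi : i ∈ S) :
    cS d S * wEF d i = 0 := by
  have h := Finset.noncommProd_erase_mul S hi (wEF d) (fun a _ b _ _ => w_comm a b)
  rw [cS, ← h, mul_assoc, w_sq, mul_zero]

lemma cS_nu_pow : ∀ (n : ℕ) (S : Finset (Fin d)), Sᶜ.card = n →
    cS d S * (nuSF d) ^ n = (n.factorial : ℂ) • cS d Finset.univ := by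
  intro n
  induction n with
  | zero =>
    intro S hS
    have : S = Finset.univ := by
      rw [← Finset.compl_empty]; rw [Finset.card_eq_zero] at hS
      rw [← hS, compl_compl]
    simp [this]
  | succ n ih =>
    intro S hS
    have step : cS d S * nuSF d = ∑ i ∈ Sᶜ, cS d (insert i S) := by
      rw [nuSF, Finset.mul_sum]
      rw [← Finset.sum_subset (Finset.subset_univ Sᶜ)
        (fun x _ hx => by
          rw [show eg d x * fg d x = wEF d x from rfl, cS_mul_mem (by simpa using hx)])]
      exact Finset.sum_congr rfl fun i hi =>
        cS_insert (Finset.mem_compl.mp hi)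
    rw [pow_succ', ← mul_assoc, step, Finset.sum_mul]
    have hterm : ∀ i ∈ Sᶜ, cS d (insert i S) * nuSF d ^ n
        = (n.factorial : ℂ) • cS d Finset.univ := by
      intro i hi
      apply ih
      have hiS : i ∉ S := Finset.mem_compl.mp hi
      rw [Finset.compl_insert, Finset.card_erase_of_mem hi, hS]
      omega
    rw [Finset.sum_congr rfl hterm, Finset.sum_const, hS]
    rw [← Nat.cast_smul_eq_nsmul ℂ, smul_smul, ← Nat.cast_mul, ← Nat.factorial_succ]
  
end SFauxSec

/-- For `c = ∏_{i∈S} eᵢfᵢ` with `k = |S|`, one has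
`c ν^(d−k) = (d−k)! ∏_{i=1}^d eᵢfᵢ` and `φ(c ν^(d−k) T±) = ±(d−k)!/2`, where `φ` is the
symmetrizing form of `P`. -/
theorem prodEF_mul_nu_pow (d : ℕ) (S : Finset (Fin d)) (φ : SF d →ₗ[ℂ] ℂ)
    (hφval : ∀ (m n : Fin d → Bool) (ℓ : Bool),
      φ (SFmono d m n ℓ) =
        if m = (fun _ => true) ∧ n = (fun _ => true) ∧ ℓ = true then 1 else 0) :
    prodEF d S * (nuSF d) ^ (d - S.card) =
      ((d - S.card).factorial : ℂ) • prodEF d Finset.univ ∧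
    φ (prodEF d S * (nuSF d) ^ (d - S.card) * Tp d) = ((d - S.card).factorial : ℂ) / 2 ∧
    φ (prodEF d S * (nuSF d) ^ (d - S.card) * Tm d) = -(((d - S.card).factorial : ℂ) / 2) := by
  have hcard : Sᶜ.card = d - S.card := by
    rw [Finset.card_compl, Fintype.card_fin]
  have h1 : prodEF d S * (nuSF d) ^ (d - S.card) =
      ((d - S.card).factorial : ℂ) • prodEF d Finset.univ := by
    rw [prodEF_eq_cS, prodEF_eq_cS]
    exact cS_nu_pow (d - S.card) S hcard
  have hmono0 : prodEF d Finset.univ = SFmono d (fun _ => true) (fun _ => true) false := by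
    simp [SFmono, prodEF]
  have hmono1 : prodEF d Finset.univ * Kg d = SFmono d (fun _ => true) (fun _ => true) true := by
    simp [SFmono, prodEF]
  have hv0 : φ (prodEF d Finset.univ) = 0 := by
    rw [hmono0, hφval]; simp
  have hv1 : φ (prodEF d Finset.univ * Kg d) = 1 := by
    rw [hmono1, hφval]; simp
  refine ⟨h1, ?_, ?_⟩
  · rw [h1, Tp, smul_mul_assoc, mul_smul_comm, map_smul, map_smul, mul_add, mul_one,
      map_add, hv0, hv1]
    simp [smul_eq_mul]
    ring
  · rw [h1, Tm, smul_mul_assoc, mul_smul_comm, map_smul, map_smul, mul_sub, mul_one,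
      map_sub, hv0, hv1]
    simp [smul_eq_mul]
    ring
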